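/- arXiv:2512.04300 — 5 statements merged into one kernel-verified Lean document; each statement's English description precedes it below -/
import Mathlib

section
/- Let A be a commutative ring of characteristic p. Suppose γ : ℕ → A is a system of divided powers on 0 ∈ A (i.e. γ_0 = 1, γ_1 = 0, and γ_n γ_m = C(n+m,n) γ_{n+m}). Then γ_n = 0 for all n with 1 ≤ n < p, and more generally γ_n = 0 for every n not divisible by p. -/
/-- For a system of divided powers on `0` in a ring of characteristic `p`,
`γ n = 0` for `1 ≤ n < p`, and more generally whenever `p ∤ n`. -/
theorem stmt1 (p : ℕ) [Fact p.Prime] (A : Type*) [CommRing A] [CharP A p]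
    (γ : ℕ → A)
    (h0 : γ 0 = 1) (h1 : γ 1 = 0)
    (hmul : ∀ n m : ℕ, γ n * γ m = ((n + m).choose n : A) * γ (n + m)) :
    (∀ n : ℕ, 1 ≤ n → n < p → γ n = 0) ∧ (∀ n : ℕ, ¬ p ∣ n → γ n = 0) := by
  have key : ∀ n : ℕ, ¬ p ∣ n → γ n = 0 := by
    intro n hn
    obtain ⟨m, rfl⟩ : ∃ m, n = m + 1 := by
      rcases n with _ | m
      · exact absurd (dvd_zero p) hn
      · exact ⟨m, rfl⟩
    have h := hmul m 1
    rw [h1, mul_zero, Nat.choose_succ_self_right] at h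
    have hu : IsUnit ((m + 1 : ℕ) : A) := by
      have hz : ((m + 1 : ℕ) : ZMod p) ≠ 0 := by
        rwa [Ne, ZMod.natCast_eq_zero_iff]
      have := hz.isUnit
      have := this.map (ZMod.castHom (dvd_refl p) A)
      simpa using this
    exact (IsUnit.mul_right_eq_zero hu).mp h.symm
  exact ⟨fun n h1n hnp => key n (Nat.not_dvd_of_pos_of_lt h1n hnp), key⟩
end

section
/- Let A be a commutative ring of characteristic p and let γ : ℕ → A be a system of divided powers on 0. Define δ_n := γ_{pn}. Then δ is again a system of divided powers on δ_1 = γ_p; that is, δ_0 = 1 and δ_n · δ_m = C(n+m, n) · δ_{n+m} for all n, m. -/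
theorem lucas_cast (p : ℕ) [Fact p.Prime] (A : Type*) [CommRing A] [CharP A p]
    (n m : ℕ) : (((p * (n + m)).choose (p * n) : ℕ) : A) = ((n + m).choose n : A) := by
  have hp : 0 < p := (Fact.out : p.Prime).pos
  have h := Choose.choose_modEq_choose_mod_mul_choose_div
    (p := p) (n := p * n + p * m) (k := p * n)
  rw [← mul_add, Nat.mul_mod_right, Nat.mul_mod_right, Nat.mul_div_cancel_left _ hp,
    Nat.mul_div_cancel_left _ hp] at h
  have h2 : (((p * (n + m)).choose (p * n) : ℤ) : ZMod p) = (((n + m).choose n : ℤ) : ZMod p) := by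
    rw [ZMod.intCast_eq_intCast_iff]
    simpa using h
  push_cast at h2
  have := congrArg (ZMod.castHom (dvd_refl p) A) h2
  simpa using this

/-- If `γ` is a system of divided powers on `0` in a ring of characteristic `p`,
then `δ n := γ (p * n)` is again a system of divided powers on `δ 1 = γ p`. -/
theorem stmt2 (p : ℕ) [Fact p.Prime] (A : Type*) [CommRing A] [CharP A p]
    (γ : ℕ → A)
    (h0 : γ 0 = 1) (h1 : γ 1 = 0)
    (hmul : ∀ n m : ℕ, γ n * γ m = ((n + m).choose n : A) * γ (n + m)) :
    γ (p * 0) = 1 ∧ γ (p * 1) = γ p ∧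
      ∀ n m : ℕ, γ (p * n) * γ (p * m) = ((n + m).choose n : A) * γ (p * (n + m)) := by
  refine ⟨by simpa using h0, by norm_num, fun n m => ?_⟩
  rw [hmul, ← mul_add, lucas_cast p A n m]
end

section
/- Let A be a commutative ring of characteristic p and let a ∈ A satisfy a^p = 1. Then the sequence γ defined by γ_n = (1−a)^n / n! for n < p (interpreting 1/n! via the unit n! in 𝔽_p for n < p) and γ_n = 0 for n ≥ p is a system of divided powers on 1 − a. In particular, every p-th root of unity a gives rise to a canonical system of nilpotent divided powers on 1−a. -/
/-- If `a ^ p = 1` in a commutative ring of characteristic `p`, then the sequence `γ`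
with `γ n = (1 - a) ^ n / n!` for `n < p` (characterized by `n! * γ n = (1 - a) ^ n`,
`n!` being a unit for `n < p`) and `γ n = 0` for `n ≥ p` is a system of
nilpotent divided powers on `1 - a`. -/
theorem stmt3 (p : ℕ) [Fact p.Prime] (A : Type*) [CommRing A] [CharP A p]
    (a : A) (ha : a ^ p = 1) (γ : ℕ → A)
    (hlt : ∀ n : ℕ, n < p → (n.factorial : A) * γ n = (1 - a) ^ n)
    (hge : ∀ n : ℕ, p ≤ n → γ n = 0) :
    γ 0 = 1 ∧ γ 1 = 1 - a ∧
      (∀ n m : ℕ, γ n * γ m = ((n + m).choose n : A) * γ (n + m)) ∧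
      ∃ N : ℕ, ∀ n : ℕ, N ≤ n → γ n = 0 := by
  have hp := (Fact.out : p.Prime)
  -- (1 - a) ^ p = 0
  have hnil : (1 - a : A) ^ p = 0 := by
    rw [sub_pow_char, one_pow, ha, sub_self]
  -- factorials below p are units
  have hunit : ∀ k : ℕ, k < p → IsUnit ((k.factorial : ℕ) : A) := by
    intro k hk
    have h1 : ((k.factorial : ℕ) : ZMod p) ≠ 0 := by
      rw [Ne, ZMod.natCast_eq_zero_iff]
      intro hdvd
      exact absurd ((Nat.Prime.dvd_factorial hp).mp hdvd) (by omega)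
    have h2 : IsUnit ((k.factorial : ℕ) : ZMod p) := h1.isUnit
    have := h2.map (ZMod.castHom (dvd_refl p) A)
    simpa using this
  have h0 : γ 0 = 1 := by
    have := hlt 0 hp.pos
    simpa using this
  have h1 : γ 1 = 1 - a := by
    have := hlt 1 hp.one_lt
    simpa using this
  refine ⟨h0, h1, ?_, ⟨p, hge⟩⟩
  intro n m
  rcases le_or_gt p n with hn | hn
  · rw [hge n hn, hge (n + m) (by omega), zero_mul, mul_zero]
  rcases le_or_gt p m with hm | hm
  · rw [hge m hm, hge (n + m) (by omega), mul_zero, mul_zero]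
  have hnm : (1 - a : A) ^ n * (1 - a) ^ m = ((n.factorial * m.factorial : ℕ) : A) * (γ n * γ m) := by
    rw [← hlt n hn, ← hlt m hm]; push_cast; ring
  rcases le_or_gt p (n + m) with h | h
  · -- (1-a)^(n+m) = 0, and factorials are units, so γ n * γ m = 0
    have hz : (1 - a : A) ^ n * (1 - a) ^ m = 0 := by
      rw [← pow_add]
      obtain ⟨k, hk⟩ : ∃ k, n + m = p + k := ⟨n + m - p, by omega⟩
      rw [hk, pow_add, hnil, zero_mul]
    have hu : IsUnit ((n.factorial * m.factorial : ℕ) : A) := by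
      push_cast
      exact (hunit n (by omega)).mul (hunit m (by omega))
    have : ((n.factorial * m.factorial : ℕ) : A) * (γ n * γ m) =
        ((n.factorial * m.factorial : ℕ) : A) * 0 := by
      rw [mul_zero, ← hnm, hz]
    rw [hu.mul_left_cancel this, hge (n + m) h, mul_zero]
  · have hu : IsUnit ((n.factorial * m.factorial : ℕ) : A) := by
      push_cast
      exact (hunit n (by omega)).mul (hunit m (by omega))
    apply hu.mul_left_cancel
    rw [← hnm, ← pow_add, ← hlt (n + m) h]
    rw [Nat.choose_symm_add, ← Nat.add_choose_mul_factorial_mul_factorial n m]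
    push_cast; ring
end

section
/- Let X be a smooth scheme over a field k of characteristic p, with relative Frobenius F : X → X'. Let F be a quasi-coherent sheaf on X' and equip E := F^* F with the canonical (Cartier) connection ∇ determined by ∇(f · F^{-1}(s)) = df ⊗ F^{-1}(s). Then the sheaf of horizontal sections ker(F_* ∇) ⊆ F_* E, viewed on X', contains F via the unit map F → F_* F^* F, and in the affine case X = Spec A, X' = Spec A' (with A free over A' on monomial basis), the horizontal sections of F^* M are exactly M ⊗ 1, i.e. the unit M → ker(∇) is an isomorphism. -/
open TensorProduct

/-- `Kxp p k` is a copy of `k[x]` playing the role of `A' = k[x^p]`, acting on `k[x]`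
through the `p`-th power (Frobenius/expand) map `g(x) ↦ g(x^p)`. -/
def Kxp (p : ℕ) (k : Type*) [CommRing k] : Type _ := Polynomial k

noncomputable instance (p : ℕ) (k : Type*) [CommRing k] : CommRing (Kxp p k) :=
  inferInstanceAs (CommRing (Polynomial k))

noncomputable instance (p : ℕ) (k : Type*) [CommRing k] :
    Algebra (Kxp p k) (Polynomial k) :=
  RingHom.toAlgebra
    ((Polynomial.expand k p).toRingHom : Kxp p k →+* Polynomial k)


section helpers
open Polynomial Finset
variable {k : Type*} [CommRing k]

/-- The identity of `k[X]`, viewed as landing in the copy `Kxp p k`. -/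
def toKxp (p : ℕ) (a : Polynomial k) : Kxp p k := a

lemma kxp_smul (p : ℕ) (g a : Polynomial k) :
    (toKxp p g) • a = Polynomial.expand k p g * a := by
  rw [Algebra.smul_def]
  rfl

lemma toKxp_mul (p : ℕ) (g h : Polynomial k) :
    toKxp p g * toKxp p h = toKxp p (g * h) := rfl

lemma toKxp_one (p : ℕ) : toKxp p (1 : Polynomial k) = 1 := rfl


/-- Extract the `i`-th slice of a polynomial: `(phiFun p i a).coeff n = a.coeff (p*n+i)`. -/
noncomputable def phiFun (p i : ℕ) (a : Polynomial k) : Polynomial k :=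
  ∑ n ∈ Finset.range (a.natDegree + 1), Polynomial.C (a.coeff (p * n + i)) * Polynomial.X ^ n

lemma coeff_phiFun {p : ℕ} (hp : 0 < p) (i : ℕ) (a : Polynomial k) (n : ℕ) :
    (phiFun p i a).coeff n = a.coeff (p * n + i) := by
  unfold phiFun
  rw [finset_sum_coeff]
  have : ∀ m ∈ Finset.range (a.natDegree + 1),
      (Polynomial.C (a.coeff (p * m + i)) * Polynomial.X ^ m).coeff n
        = if m = n then a.coeff (p * n + i) else 0 := by
    intro m _
    rw [coeff_C_mul, coeff_X_pow]
    rcases eq_or_ne m n with rfl | h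
    · simp
    · simp [h, h.symm]
  rw [Finset.sum_congr rfl this, Finset.sum_ite_eq']
  by_cases hn : n ∈ Finset.range (a.natDegree + 1)
  · simp [hn]
  · simp only [hn, if_neg, if_false]
    rw [Polynomial.coeff_eq_zero_of_natDegree_lt]
    have : a.natDegree < n := by simpa using Nat.lt_of_not_le (by simpa using hn)
    calc a.natDegree < n := this
      _ ≤ p * n + i := by nlinarith

lemma coeff_expand_mul {p : ℕ} (hp : 0 < p) (i : ℕ) (hi : i < p) (g a : Polynomial k) (n : ℕ) :
    (Polynomial.expand k p g * a).coeff (p * n + i)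
      = ∑ x ∈ Finset.HasAntidiagonal.antidiagonal n, g.coeff x.1 * a.coeff (p * x.2 + i) := by
  rw [Polynomial.coeff_mul]
  rw [show ∑ x ∈ Finset.HasAntidiagonal.antidiagonal n, g.coeff x.1 * a.coeff (p * x.2 + i)
      = ∑ x ∈ (Finset.HasAntidiagonal.antidiagonal n).image (fun y : ℕ × ℕ => (p * y.1, p * y.2 + i)),
          (Polynomial.expand k p g).coeff x.1 * a.coeff x.2 from ?_]
  · apply (Finset.sum_subset ?_ ?_).symm
    · intro x hx
      simp only [Finset.mem_image, Finset.HasAntidiagonal.mem_antidiagonal] at hx ⊢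
      obtain ⟨y, hy, rfl⟩ := hx
      have : p * y.1 + p * y.2 = p * n := by rw [← Nat.mul_add, hy]
      omega
    · intro x hx hx'
      rw [Polynomial.coeff_expand hp]
      simp only [Finset.HasAntidiagonal.mem_antidiagonal] at hx
      rw [if_neg, zero_mul]
      intro ⟨j, hj⟩
      apply hx'
      simp only [Finset.mem_image, Finset.HasAntidiagonal.mem_antidiagonal]
      have hjn : j ≤ n := by
        by_contra hjn
        have h1 : p * (n + 1) ≤ p * j := Nat.mul_le_mul_left p (by omega)
        have h2 : p * (n + 1) = p * n + p := by ring
        omega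
      have hnj : p * (n - j) + p * j = p * n := by
        rw [← Nat.mul_add]; congr 1; omega
      refine ⟨(j, n - j), by simp [Finset.HasAntidiagonal.mem_antidiagonal]; omega, ?_⟩
      show (p * j, p * (n - j) + i) = x
      have hx1 : x.1 = p * j := hj
      have hx2 : x.2 = p * (n - j) + i := by omega
      exact Prod.ext (by omega) (by omega)
  · rw [Finset.sum_image]
    · apply Finset.sum_congr rfl
      intro x hx
      rw [Polynomial.coeff_expand hp, if_pos ⟨x.1, rfl⟩, Nat.mul_div_cancel_left _ hp]
    · intro x _ y _ h
      simp only [Prod.mk.injEq] at h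
      obtain ⟨h1, h2⟩ := h
      exact Prod.ext (Nat.eq_of_mul_eq_mul_left hp h1) (Nat.eq_of_mul_eq_mul_left hp (by omega))

lemma phiFun_smul {p : ℕ} (hp : 0 < p) (i : ℕ) (hi : i < p) (g a : Polynomial k) :
    phiFun p i (Polynomial.expand k p g * a) = g * phiFun p i a := by
  ext n
  rw [coeff_phiFun hp, coeff_expand_mul hp i hi, Polynomial.coeff_mul]
  apply Finset.sum_congr rfl
  intro x _
  rw [coeff_phiFun hp]

lemma phiFun_add {p : ℕ} (hp : 0 < p) (i : ℕ) (a b : Polynomial k) :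
    phiFun p i (a + b) = phiFun p i a + phiFun p i b := by
  ext n
  simp [coeff_phiFun hp]

lemma phiFun_decomp {p : ℕ} (hp : 0 < p) (a : Polynomial k) :
    ∑ i ∈ Finset.range p, Polynomial.expand k p (phiFun p i a) * Polynomial.X ^ i = a := by
  ext m
  rw [finset_sum_coeff]
  have : ∀ i ∈ Finset.range p,
      (Polynomial.expand k p (phiFun p i a) * Polynomial.X ^ i).coeff m
        = if i = m % p then a.coeff m else 0 := by
    intro i hi
    simp only [Finset.mem_range] at hi
    rw [Polynomial.coeff_mul_X_pow', ]
    by_cases h1 : i ≤ m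
    · rw [if_pos h1, Polynomial.coeff_expand hp]
      by_cases h2 : p ∣ (m - i)
      · obtain ⟨q, hq⟩ := h2
        have hm : m = p * q + i := by omega
        have him : i = m % p := by rw [hm, Nat.mul_add_mod, Nat.mod_eq_of_lt hi]
        rw [if_pos ⟨q, hq⟩, if_pos him, coeff_phiFun hp]
        have hdiv : (m - i) / p = q := by rw [hq, Nat.mul_div_cancel_left _ hp]
        rw [hdiv, ← hm]
      · rw [if_neg h2, if_neg]
        intro him
        have hmd := Nat.mod_add_div m p
        exact h2 ⟨m / p, by omega⟩
    · have := Nat.mod_le m p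
      rw [if_neg h1, if_neg (by omega)]
  rw [Finset.sum_congr rfl this, Finset.sum_ite_eq']
  rw [if_pos (Finset.mem_range.mpr (Nat.mod_lt _ hp))]

lemma phiFun_X_pow {p : ℕ} (hp : 0 < p) (i j : ℕ) (hj : j < p) :
    phiFun p i ((Polynomial.X : Polynomial k) ^ j) = if i = j then 1 else 0 := by
  ext n
  rw [coeff_phiFun hp, Polynomial.coeff_X_pow]
  rcases Nat.eq_zero_or_pos n with rfl | hn
  · simp only [Nat.mul_zero, Nat.zero_add]
    by_cases h : i = j <;> simp [h]
  · have h1 : p * n + i ≠ j := by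
      have : p * 1 ≤ p * n := Nat.mul_le_mul_left p hn
      omega
    rw [if_neg h1]
    by_cases h : i = j <;> simp [h, Polynomial.coeff_one, hn.ne']

lemma phiFun_C_mul {p : ℕ} (hp : 0 < p) (i : ℕ) (c : k) (a : Polynomial k) :
    phiFun p i (Polynomial.C c * a) = Polynomial.C c * phiFun p i a := by
  ext n
  rw [coeff_phiFun hp, Polynomial.coeff_C_mul, Polynomial.coeff_C_mul, coeff_phiFun hp]

noncomputable def phi (p : ℕ) {k : Type*} [CommRing k] (hp : 0 < p) (i : ℕ) (hi : i < p) :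
    Polynomial k →ₗ[Kxp p k] Kxp p k where
  toFun a := toKxp p (phiFun p i a)
  map_add' a b := congrArg (toKxp p) (phiFun_add hp i a b)
  map_smul' g a := by
    show toKxp p (phiFun p i ((toKxp p g) • a)) = g • toKxp p (phiFun p i a)
    rw [kxp_smul (k := k) p g a, phiFun_smul hp i hi (k := k) g a]
    rfl

end helpers

/-- Cartier unit isomorphism for the affine line: for `A = k[x]` free over `A' = k[x^p]`
and `M` an `A'`-module, equip `E = A ⊗_{A'} M` with the canonical Frobenius-descent
connection `∇(a ⊗ m) = a' ⊗ m`. Then `m ↦ 1 ⊗ m` is injective (the unit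
`M → F_* F^* M`), and the horizontal sections of `E` are exactly `1 ⊗ M`, i.e. the unit
map `M → ker ∇` is an isomorphism. -/
theorem stmt15 (p : ℕ) [Fact p.Prime] (k : Type*) [Field k] [CharP k p]
    (M : Type*) [AddCommGroup M] [Module (Kxp p k) M]
    (nabla : TensorProduct (Kxp p k) (Polynomial k) M →+
      TensorProduct (Kxp p k) (Polynomial k) M)
    (hnabla : ∀ (a : Polynomial k) (m : M),
      nabla (a ⊗ₜ[Kxp p k] m) = (Polynomial.derivative a) ⊗ₜ[Kxp p k] m) :
    Function.Injective (fun m : M => (1 : Polynomial k) ⊗ₜ[Kxp p k] m) ∧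
    ∀ e : TensorProduct (Kxp p k) (Polynomial k) M,
      nabla e = 0 ↔ ∃ m : M, e = (1 : Polynomial k) ⊗ₜ[Kxp p k] m := by
  have hpp := (Fact.out : p.Prime)
  have hp : 0 < p := hpp.pos
  -- the slice maps E → M
  set L : Fin p → (TensorProduct (Kxp p k) (Polynomial k) M →ₗ[Kxp p k] M) :=
    fun i => TensorProduct.lift
      ((LinearMap.lsmul (Kxp p k) M).comp (phi p hp (i : ℕ) i.2)) with hLdef
  have hL : ∀ (i : Fin p) (a : Polynomial k) (m : M),
      L i (a ⊗ₜ[Kxp p k] m) = toKxp p (phiFun p (i : ℕ) a) • m := fun i a m => rfl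
  -- slice of a monomial type tensor
  have hLX : ∀ (i : Fin p) (j : ℕ), j < p → ∀ (c : k) (m : M),
      L i ((Polynomial.C c * Polynomial.X ^ j) ⊗ₜ[Kxp p k] m)
        = if (i : ℕ) = j then toKxp p (Polynomial.C c) • m else 0 := by
    intro i j hj c m
    rw [hL, phiFun_C_mul hp, phiFun_X_pow hp _ j hj]
    by_cases h : (i : ℕ) = j
    · rw [if_pos h, if_pos h, mul_one]
    · rw [if_neg h, if_neg h, mul_zero]
      show toKxp p 0 • m = 0
      exact zero_smul _ m
  -- decomposition of an arbitrary element
  have hdecomp : ∀ e : TensorProduct (Kxp p k) (Polynomial k) M,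
      e = ∑ i : Fin p, (Polynomial.X ^ (i : ℕ) : Polynomial k) ⊗ₜ[Kxp p k] L i e := by
    intro e
    induction e using TensorProduct.induction_on with
    | zero => simp
    | tmul a m =>
      have step : ∀ i : Fin p,
          (Polynomial.X ^ (i : ℕ) : Polynomial k) ⊗ₜ[Kxp p k] (L i (a ⊗ₜ[Kxp p k] m))
            = (Polynomial.expand k p (phiFun p (i : ℕ) a) * Polynomial.X ^ (i : ℕ))
                ⊗ₜ[Kxp p k] m := by
        intro i
        rw [hL, tmul_smul, smul_tmul', kxp_smul]
      rw [Finset.sum_congr rfl (fun i _ => step i), ← TensorProduct.sum_tmul]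
      congr 1
      rw [Fin.sum_univ_eq_sum_range (fun i =>
        Polynomial.expand k p (phiFun p i a) * Polynomial.X ^ i)]
      exact (phiFun_decomp hp a).symm
    | add x y hx hy =>
      simp only [map_add, tmul_add, Finset.sum_add_distrib]
      rw [← hx, ← hy]
  constructor
  · -- injectivity
    intro m₁ m₂ h
    have h0 : (0 : ℕ) < p := hp
    have hunit : ∀ m : M, L ⟨0, h0⟩ ((1 : Polynomial k) ⊗ₜ[Kxp p k] m) = m := by
      intro m
      rw [hL]
      have h1 : phiFun p 0 (1 : Polynomial k) = 1 := by
        have h2 := phiFun_X_pow (k := k) hp 0 0 h0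
        rw [pow_zero] at h2
        simpa using h2
      rw [h1, toKxp_one, one_smul]
    have := congrArg (L ⟨0, h0⟩) h
    rwa [hunit, hunit] at this
  · intro e
    constructor
    · intro he
      -- all higher slices vanish
      have hz : ∀ i : Fin p, 0 < (i : ℕ) → L i e = 0 := by
        intro t ht
        set c : k := ((t : ℕ) : k) with hc
        have hcne : c ≠ 0 := by
          rw [hc, Ne, CharP.cast_eq_zero_iff k p]
          intro hdvd
          exact absurd (Nat.le_of_dvd ht hdvd) (by omega)
        have h0 : (0 : TensorProduct (Kxp p k) (Polynomial k) M)
            = ∑ i : Fin p,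
              (Polynomial.C ((i : ℕ) : k) * Polynomial.X ^ ((i : ℕ) - 1))
                ⊗ₜ[Kxp p k] L i e := by
          calc (0 : TensorProduct (Kxp p k) (Polynomial k) M) = nabla e := he.symm
            _ = nabla (∑ i : Fin p, (Polynomial.X ^ (i : ℕ) : Polynomial k)
                  ⊗ₜ[Kxp p k] L i e) := by rw [← hdecomp e]
            _ = ∑ i : Fin p, nabla ((Polynomial.X ^ (i : ℕ) : Polynomial k)
                  ⊗ₜ[Kxp p k] L i e) := map_sum nabla _ _
            _ = _ := by
                refine Finset.sum_congr rfl fun i _ => ?_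
                rw [hnabla, Polynomial.derivative_X_pow]
        have ht1 : (t : ℕ) - 1 < p := by omega
        have := congrArg (L ⟨(t : ℕ) - 1, ht1⟩) h0
        rw [map_zero, map_sum] at this
        have heval : ∀ i : Fin p,
            L ⟨(t : ℕ) - 1, ht1⟩ ((Polynomial.C ((i : ℕ) : k)
              * Polynomial.X ^ ((i : ℕ) - 1)) ⊗ₜ[Kxp p k] L i e)
            = if i = t then toKxp p (Polynomial.C c) • L t e else 0 := by
          intro i
          rw [hLX _ _ (by omega)]
          by_cases h1 : i = t
          · subst h1
            rw [if_pos rfl, if_pos rfl]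
          · rw [if_neg h1]
            rcases Nat.eq_zero_or_pos (i : ℕ) with h2 | h2
            · rw [if_congr Iff.rfl rfl rfl]
              split
              · rw [h2]
                show toKxp p (Polynomial.C ((0 : ℕ) : k)) • L i e = 0
                rw [Nat.cast_zero, Polynomial.C_0]
                exact zero_smul _ _
              · rfl
            · rw [if_neg]
              intro h3
              have h3' : (t : ℕ) - 1 = (i : ℕ) - 1 := h3
              exact h1 (Fin.ext (by omega))
        rw [Finset.sum_congr rfl (fun i _ => heval i), Finset.sum_ite_eq' Finset.univ t,
          if_pos (Finset.mem_univ t)] at this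
        -- C c is invertible
        have : toKxp p (Polynomial.C c⁻¹) • (toKxp p (Polynomial.C c) • L t e)
            = 0 := by rw [← this, smul_zero]
        rwa [smul_smul, toKxp_mul, ← Polynomial.C_mul, inv_mul_cancel₀ hcne,
          Polynomial.C_1, toKxp_one, one_smul] at this
      refine ⟨L ⟨0, hp⟩ e, ?_⟩
      calc e = ∑ i : Fin p, (Polynomial.X ^ (i : ℕ) : Polynomial k)
            ⊗ₜ[Kxp p k] L i e := hdecomp e
        _ = (Polynomial.X ^ ((⟨0, hp⟩ : Fin p) : ℕ) : Polynomial k)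
            ⊗ₜ[Kxp p k] L ⟨0, hp⟩ e := by
          refine Finset.sum_eq_single _ (fun i _ hi => ?_) (fun h => absurd (Finset.mem_univ _) h)
          rw [hz i (by
            rcases Nat.eq_zero_or_pos (i : ℕ) with h2 | h2
            · exact absurd (Fin.ext h2) hi
            · exact h2), tmul_zero]
        _ = (1 : Polynomial k) ⊗ₜ[Kxp p k] L ⟨0, hp⟩ e := by rw [pow_zero]
    · rintro ⟨m, rfl⟩
      rw [hnabla, Polynomial.derivative_one, TensorProduct.zero_tmul]
end

section
/- Let A be a commutative ring of characteristic p and let b ∈ A admit a system of nilpotent divided powers γ (γ_N = 0 for N ≫ 0). Then a := 1 − b satisfies a^p = 1 if additionally γ_n = 0 for all n ≥ p. Conversely combined with the forward construction, the map (a, γ) ↦ a defines a surjection from pairs (unit a, nilpotent divided power structure on 1−a) onto the p-th roots of unity μ_p(A) = {a : a^p = 1}, and its fibre over a = 1 is the set of nilpotent divided power structures on 0. -/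
lemma aux_pow_eq (p : ℕ) [Fact p.Prime] (A : Type*) [CommRing A] [CharP A p]
    (b : A) (γ : ℕ → A) (h0 : γ 0 = 1) (h1 : γ 1 = b)
    (hmul : ∀ n m : ℕ, γ n * γ m = ((n + m).choose n : A) * γ (n + m)) :
    ∀ n : ℕ, b ^ n = (n.factorial : A) * γ n := by
  intro n
  induction n with
  | zero => simp [h0]
  | succ n ih =>
    have := hmul n 1
    rw [h1, Nat.choose_succ_self_right] at this
    rw [pow_succ, ih, mul_assoc, this]
    push_cast [Nat.factorial_succ]
    ring

lemma zmod_fact_unit (p : ℕ) [Fact p.Prime] {n : ℕ} (hn : n < p) :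
    ((n.factorial : ZMod p) : ZMod p) ≠ 0 := by
  haveI := Fact.out (p := p.Prime)
  rw [Ne, ZMod.natCast_eq_zero_iff]
  rw [this.dvd_factorial]
  omega

/-- (i) If `b` has a divided power structure vanishing in degrees `≥ p`, then
`(1 - b) ^ p = 1`. (ii) Every `p`-th root of unity `a` admits a nilpotent divided power
structure on `1 - a`, so `(a, γ) ↦ a` surjects onto `μ_p(A)`. (iii) The fibre over
`a = 1` is the set of nilpotent divided power structures on `0`. -/
theorem stmt18 (p : ℕ) [Fact p.Prime] (A : Type*) [CommRing A] [CharP A p] :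
    (∀ (b : A) (γ : ℕ → A), γ 0 = 1 → γ 1 = b →
      (∀ n m : ℕ, γ n * γ m = ((n + m).choose n : A) * γ (n + m)) →
      (∀ n : ℕ, p ≤ n → γ n = 0) → (1 - b) ^ p = 1) ∧
    (∀ a : A, a ^ p = 1 → ∃ γ : ℕ → A, γ 0 = 1 ∧ γ 1 = 1 - a ∧
      (∀ n m : ℕ, γ n * γ m = ((n + m).choose n : A) * γ (n + m)) ∧
      ∃ N : ℕ, ∀ n : ℕ, N ≤ n → γ n = 0) ∧
    ({γ : ℕ → A | γ 0 = 1 ∧ γ 1 = 1 - (1 : A) ∧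
        (∀ n m : ℕ, γ n * γ m = ((n + m).choose n : A) * γ (n + m)) ∧
        ∃ N : ℕ, ∀ n : ℕ, N ≤ n → γ n = 0} =
      {γ : ℕ → A | γ 0 = 1 ∧ γ 1 = 0 ∧
        (∀ n m : ℕ, γ n * γ m = ((n + m).choose n : A) * γ (n + m)) ∧
        ∃ N : ℕ, ∀ n : ℕ, N ≤ n → γ n = 0}) := by
  haveI hp := Fact.out (p := p.Prime)
  refine ⟨?_, ?_, by simp⟩
  · intro b γ h0 h1 hmul hvan
    have hbp : b ^ p = 0 := by
      rw [aux_pow_eq p A b γ h0 h1 hmul p, hvan p le_rfl, mul_zero]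
    rw [sub_pow_char, one_pow, hbp, sub_zero]
  · intro a ha
    set b : A := 1 - a with hb
    have hbp : b ^ p = 0 := by
      rw [hb, sub_pow_char, one_pow, ha, sub_self]
    set φ : ZMod p →+* A := ZMod.castHom dvd_rfl A with hφ
    refine ⟨fun n => if n < p then φ ((n.factorial : ZMod p)⁻¹) * b ^ n else 0,
      ?_, ?_, ?_, p, fun n hn => by simp [Nat.not_lt.mpr hn]⟩
    · simp [hp.pos]
    · have : 1 < p := hp.one_lt
      simp [this]
    · intro n m
      by_cases hn : n < p
      · by_cases hm : m < p
        · by_cases hnm : n + m < p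
          · simp only [if_pos hn, if_pos hm, if_pos hnm]
            have key : (n.factorial : ZMod p)⁻¹ * (m.factorial : ZMod p)⁻¹ =
                ((n + m).choose n : ZMod p) * ((n + m).factorial : ZMod p)⁻¹ := by
              have h1 := zmod_fact_unit p hn
              have h2 := zmod_fact_unit p hm
              have h3 := zmod_fact_unit p hnm
              field_simp
              have hc : ((n + m).choose n * n.factorial * m.factorial : ℕ) =
                  (n + m).factorial := by
                rw [Nat.add_comm n m, mul_right_comm]
                exact Nat.add_choose_mul_factorial_mul_factorial m n
              have := congrArg (fun k : ℕ => (k : ZMod p)) hc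
              push_cast at this
              linear_combination -this
            calc φ ((n.factorial : ZMod p)⁻¹) * b ^ n *
                  (φ ((m.factorial : ZMod p)⁻¹) * b ^ m)
                = φ ((n.factorial : ZMod p)⁻¹ * (m.factorial : ZMod p)⁻¹) *
                  b ^ (n + m) := by rw [map_mul, pow_add]; ring
              _ = ((n + m).choose n : A) *
                  (φ (((n + m).factorial : ZMod p)⁻¹) * b ^ (n + m)) := by
                  rw [key, map_mul, map_natCast]; ring
          · simp only [if_pos hn, if_pos hm, if_neg hnm]
            have : b ^ (n + m) = 0 := by
              have : b ^ (n + m) = b ^ p * b ^ (n + m - p) := by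
                rw [← pow_add]; congr 1; omega
              rw [this, hbp, zero_mul]
            calc φ ((n.factorial : ZMod p)⁻¹) * b ^ n *
                  (φ ((m.factorial : ZMod p)⁻¹) * b ^ m)
                = φ ((n.factorial : ZMod p)⁻¹) * φ ((m.factorial : ZMod p)⁻¹) *
                  b ^ (n + m) := by rw [pow_add]; ring
              _ = 0 := by rw [this, mul_zero]
              _ = ((n + m).choose n : A) * 0 := by rw [mul_zero]
        · have h' : ¬ n + m < p := by omega
          simp [if_neg hm, if_neg h']
      · have h' : ¬ n + m < p := by omega
        simp [if_neg hn, if_neg h']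
end
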